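/- arXiv:1305.0481 — 2 statements merged into one kernel-verified Lean document; each statement's English description precedes it below -/
import Mathlib

section
/- Let γ_d ⊂ ∂ω have positive H¹-measure with ∫_{γ_d} x' dH¹ = 0 and ∫_{γ_d}|x'|² dH¹ = c > 0. If Q̂^ε ∈ SO(2) and b^ε ∈ ℝ² satisfy |(Q̂^ε − Id)x' + b^ε| ≤ Cε^{α−2} for H¹-a.e. x' ∈ γ_d, then |Q̂^ε − Id| ≤ C' ε^{α−2} for a constant C' depending only on γ_d and C. -/
/-!
Write `A = Q - 1`. Since `∫ x dμ = 0`, the affine field `A x + b` splits `L²(μ)`-orthogonally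
into `A x` and the constant `b`, so `∫ ‖A x‖² ≤ ∫ ‖A x + b‖² ≤ μ(γ_d) (Cε^{α-2})²`. For a rotation,
`2‖A x‖² = ‖A‖²‖x‖²`, hence `∫ ‖A x‖² = c ‖A‖² / 2`, which gives
`‖A‖ ≤ √(2 μ(γ_d) / c) |C| ε^{α-2}`.
-/

open Matrix MeasureTheory

attribute [local instance]
  Matrix.frobeniusNormedAddCommGroup Matrix.frobeniusNormedSpace

namespace Matrix

lemma frobenius_norm_sq_fin_two (A : Matrix (Fin 2) (Fin 2) ℝ) :
    ‖A‖ ^ 2 = A 0 0 ^ 2 + A 0 1 ^ 2 + A 1 0 ^ 2 + A 1 1 ^ 2 := by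
  rw [frobenius_norm_def, ← Real.rpow_natCast _ 2, ← Real.rpow_mul (by positivity)]
  norm_num [Fin.sum_univ_two]
  ring

lemma fin_two_entries_of_orthogonal_of_det_eq_one {Q : Matrix (Fin 2) (Fin 2) ℝ}
    (hQ : Qᵀ * Q = 1) (hdet : Q.det = 1) : Q 1 1 = Q 0 0 ∧ Q 1 0 = -Q 0 1 := by
  have h00 := congrFun (congrFun hQ 0) 0
  have h01 := congrFun (congrFun hQ 0) 1
  have h11 := congrFun (congrFun hQ 1) 1
  simp only [mul_apply, Fin.sum_univ_two, transpose_apply, one_apply_eq,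
    one_apply_ne (by decide : (0 : Fin 2) ≠ 1)] at h00 h01 h11
  rw [det_fin_two] at hdet
  constructor
  · linear_combination Q 0 0 * hdet + Q 1 0 * h01 - Q 1 1 * h00
  · linear_combination Q 1 1 * h01 - Q 0 1 * hdet - Q 1 0 * h11

lemma two_mul_norm_toEuclideanLin_sub_one_sq {Q : Matrix (Fin 2) (Fin 2) ℝ}
    (hQ : Qᵀ * Q = 1) (hdet : Q.det = 1) (x : EuclideanSpace ℝ (Fin 2)) :
    2 * ‖toEuclideanLin (Q - 1) x‖ ^ 2 = ‖Q - 1‖ ^ 2 * ‖x‖ ^ 2 := by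
  obtain ⟨hd, hc⟩ := fin_two_entries_of_orthogonal_of_det_eq_one hQ hdet
  simp only [EuclideanSpace.real_norm_sq_eq, frobenius_norm_sq_fin_two, Fin.sum_univ_two,
    toLpLin_apply, mulVec, dotProduct, sub_apply, one_apply_eq,
    one_apply_ne (by decide : (0 : Fin 2) ≠ 1), one_apply_ne (by decide : (1 : Fin 2) ≠ 0), hd, hc]
  ring

end Matrix

section CenteredBound

variable {α F : Type*} [MeasurableSpace α] {μ : Measure α} [IsFiniteMeasure μ]
  [NormedAddCommGroup F] [InnerProductSpace ℝ F] [CompleteSpace F]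

lemma integral_norm_add_const_sq {g : α → F} (hg : Integrable g μ)
    (hg2 : Integrable (fun x ↦ ‖g x‖ ^ 2) μ) (hmean : ∫ x, g x ∂μ = 0) (b : F) :
    ∫ x, ‖g x + b‖ ^ 2 ∂μ = ∫ x, ‖g x‖ ^ 2 ∂μ + μ.real Set.univ * ‖b‖ ^ 2 := by
  have hcross : Integrable (fun x ↦ 2 * inner ℝ b (g x)) μ :=
    (hg.const_inner b).const_mul 2
  have hlin : Integrable (fun x ↦ ‖g x‖ ^ 2 + 2 * inner ℝ b (g x)) μ := hg2.add hcross
  simp_rw [norm_add_sq_real, real_inner_comm b]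
  rw [integral_add hlin (integrable_const _), integral_add hg2 hcross,
    integral_const_mul, integral_inner hg b, hmean, inner_zero_right, integral_const, smul_eq_mul]
  ring

lemma integral_norm_sq_le_of_ae_norm_add_const_le {g : α → F} (hg : Integrable g μ)
    (hg2 : Integrable (fun x ↦ ‖g x‖ ^ 2) μ) (hmean : ∫ x, g x ∂μ = 0) {b : F} {R : ℝ}
    (hR : ∀ᵐ x ∂μ, ‖g x + b‖ ≤ R) :
    ∫ x, ‖g x‖ ^ 2 ∂μ ≤ μ.real Set.univ * R ^ 2 := by
  have hsum : Integrable (fun x ↦ ‖g x + b‖ ^ 2) μ := by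
    simp_rw [norm_add_sq_real, real_inner_comm b]
    exact (hg2.add ((hg.const_inner b).const_mul 2)).add (integrable_const _)
  have hle : ∫ x, ‖g x + b‖ ^ 2 ∂μ ≤ ∫ _, R ^ 2 ∂μ :=
    integral_mono_ae hsum (integrable_const _) <| hR.mono fun x hx ↦
      pow_le_pow_left₀ (norm_nonneg _) hx 2
  rw [integral_norm_add_const_sq hg hg2 hmean, integral_const, smul_eq_mul] at hle
  nlinarith [sq_nonneg ‖b‖, measureReal_nonneg (μ := μ) (s := Set.univ)]

end CenteredBound

theorem stmt10_general
    (γd : Set (EuclideanSpace ℝ (Fin 2)))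
    (μ : Measure (EuclideanSpace ℝ (Fin 2)))
    (hμ : μ = (MeasureTheory.Measure.hausdorffMeasure 1).restrict γd)
    (hfin : μ γd < ⊤)
    (hmean : (∫ x, x ∂μ) = 0)
    (c : ℝ) (hc : 0 < c) (hsq : (∫ x, ‖x‖ ^ 2 ∂μ) = c)
    (C : ℝ) :
    ∃ C' > (0:ℝ), ∀ (α : ℝ), 3 ≤ α → ∀ (ε : ℝ), 0 < ε →
      ∀ (Q : Matrix (Fin 2) (Fin 2) ℝ) (b : EuclideanSpace ℝ (Fin 2)),
        Qᵀ * Q = 1 → Q.det = 1 →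
        (∀ᵐ x ∂μ, ‖Matrix.toEuclideanLin (Q - 1) x + b‖ ≤ C * ε ^ (α - 2)) →
        ‖Q - 1‖ ≤ C' * ε ^ (α - 2) := by
  have : IsFiniteMeasure μ := by
    subst hμ
    exact isFiniteMeasure_restrict.2 (by simpa using hfin.ne)
  have hsqInt : Integrable (fun x : EuclideanSpace ℝ (Fin 2) ↦ ‖x‖ ^ 2) μ :=
    Integrable.of_integral_ne_zero (hsq ▸ hc.ne')
  have hxInt : Integrable (fun x : EuclideanSpace ℝ (Fin 2) ↦ x) μ :=
    ((memLp_two_iff_integrable_sq_norm aestronglyMeasurable_id).2 hsqInt).integrable one_le_two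
  set m := μ.real Set.univ
  refine ⟨√(2 * m / c) * |C| + 1, by positivity, fun α _ ε hε Q b hQ hdet hbound ↦ ?_⟩
  set A := LinearMap.toContinuousLinearMap (toEuclideanLin (Q - 1))
  have hnorm (x) : ‖A x‖ ^ 2 = ‖Q - 1‖ ^ 2 / 2 * ‖x‖ ^ 2 := by
    change ‖toEuclideanLin (Q - 1) x‖ ^ 2 = _
    linarith [two_mul_norm_toEuclideanLin_sub_one_sq hQ hdet x]
  have hA2 : ∫ x, ‖A x‖ ^ 2 ∂μ ≤ m * (C * ε ^ (α - 2)) ^ 2 :=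
    integral_norm_sq_le_of_ae_norm_add_const_le (A.integrable_comp hxInt)
      (by simpa only [hnorm] using hsqInt.const_mul _)
      (by rw [A.integral_comp_comm hxInt, hmean, map_zero]) hbound
  simp only [hnorm, integral_const_mul, hsq] at hA2
  have hε' : 0 ≤ ε ^ (α - 2) := by positivity
  have hsqrt : √(2 * m / c) ^ 2 = 2 * m / c := Real.sq_sqrt (by positivity)
  calc ‖Q - 1‖ ≤ √(2 * m / c) * |C| * ε ^ (α - 2) := by
        refine (pow_le_pow_iff_left₀ (norm_nonneg _) (by positivity) two_ne_zero).1 ?_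
        rw [mul_pow, mul_pow, hsqrt, sq_abs]
        field_simp
        nlinarith
    _ ≤ (√(2 * m / c) * |C| + 1) * ε ^ (α - 2) := by nlinarith

/-- on a normalized boundary portion `γ_d` of positive `H¹`-measure, an a.e.
bound `|(Q̂^ε − Id)x' + b^ε| ≤ Cε^{α−2}` for `Q̂^ε ∈ SO(2)` forces
`|Q̂^ε − Id| ≤ C'ε^{α−2}` with `C'` depending only on `γ_d` and `C`. -/
theorem stmt10
    (γd : Set (EuclideanSpace ℝ (Fin 2)))
    (μ : Measure (EuclideanSpace ℝ (Fin 2)))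
    (hμ : μ = (MeasureTheory.Measure.hausdorffMeasure 1).restrict γd)
    (hpos : 0 < μ γd) (hfin : μ γd < ⊤)
    (hmean : (∫ x, x ∂μ) = 0)
    (c : ℝ) (hc : 0 < c) (hsq : (∫ x, ‖x‖ ^ 2 ∂μ) = c)
    (C : ℝ) :
    ∃ C' > (0:ℝ), ∀ (α : ℝ), 3 ≤ α → ∀ (ε : ℝ), 0 < ε →
      ∀ (Q : Matrix (Fin 2) (Fin 2) ℝ) (b : EuclideanSpace ℝ (Fin 2)),
        Qᵀ * Q = 1 → Q.det = 1 →
        (∀ᵐ x ∂μ, ‖Matrix.toEuclideanLin (Q - 1) x + b‖ ≤ C * ε ^ (α - 2)) →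
        ‖Q - 1‖ ≤ C' * ε ^ (α - 2) :=
  stmt10_general γd μ hμ hfin hmean c hc hsq C
end

section
/- Let Q : M^{3×3} → [0,∞) be a quadratic form, positive definite on symmetric matrices, with Q(F) = Q(sym F). For F' ∈ M^{2×2}, define Q₂(F') := min over λ₁,λ₂,λ₃ ∈ ℝ of Q of the symmetric 3×3 matrix whose 2×2 upper-left block is sym F', whose (1,3),(3,1) entries are λ₁, (2,3),(3,2) entries are λ₂, and (3,3) entry is λ₃. Then the minimizer (λ₁,λ₂,λ₃) is unique, the map 𝔸 sending F' to the minimizing symmetric matrix is linear in F', and Q₂ is a quadratic form on M^{2×2}, positive definite on symmetric 2×2 matrices. -/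
open Matrix

/-- Frobenius inner product on 3×3 matrices. -/
noncomputable def mdot (A B : Matrix (Fin 3) (Fin 3) ℝ) : ℝ :=
  ∑ i, ∑ j, A i j * B i j

/-- Symmetric part. -/
noncomputable def symPart (A : Matrix (Fin 3) (Fin 3) ℝ) : Matrix (Fin 3) (Fin 3) ℝ :=
  (1/2 : ℝ) • (A + Aᵀ)

/-- The symmetric 3×3 matrix with upper-left block `sym F` and third row/column `(λ₁,λ₂,λ₃)`. -/
noncomputable def relMat (F : Matrix (Fin 2) (Fin 2) ℝ) (l : Fin 3 → ℝ) :
    Matrix (Fin 3) (Fin 3) ℝ :=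
  let s := (1/2 : ℝ) • (F + Fᵀ)
  !![s 0 0, s 0 1, l 0; s 1 0, s 1 1, l 1; l 0, l 1, l 2]

/-!
Fix `F'` and write the candidate matrices as `v + L λ`, where `v = relMat F' 0` and
`L λ = relMat 0 λ` is injective with symmetric values, so `Q ∘ L` is positive definite.
Its polar form is then a nondegenerate bilinear form on `ℝ³`, and solving
`polar Q (v + L λ) (L ·) = 0` gives a `λ` depending linearly on `v`. For that `λ`,
orthogonality gives `Q (v + L μ) = Q (v + L λ) + Q (L (μ - λ))`, so `λ` is the unique
minimiser. Since the minimising matrix has `sym F'` as its upper-left block, it is nonzero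
for nonzero symmetric `F'`.
-/

namespace QuadraticMap

variable {𝕜 U V : Type*} [Field 𝕜] [LinearOrder 𝕜] [IsStrictOrderedRing 𝕜]
  [AddCommGroup U] [Module 𝕜 U] [FiniteDimensional 𝕜 U] [AddCommGroup V] [Module 𝕜 V]
  (Q : QuadraticForm 𝕜 V) (L : U →ₗ[𝕜] V)

lemma nondegenerate_polarBilin_comp (hL : ∀ u ≠ 0, 0 < Q (L u)) :
    (Q.comp L).polarBilin.Nondegenerate :=
  LinearMap.BilinForm.Nondegenerate.ofSeparatingLeft fun u hu => by
    by_contra hu0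
    have := hu u
    rw [polarBilin_apply_apply, polar_self, comp_apply, two_nsmul] at this
    linarith [hL u hu0]

noncomputable def minimizerAlong (hL : ∀ u ≠ 0, 0 < Q (L u)) : V →ₗ[𝕜] U :=
  -((LinearMap.BilinForm.toDual _ (nondegenerate_polarBilin_comp Q L hL)).symm.toLinearMap ∘ₗ
    L.dualMap ∘ₗ Q.polarBilin)

variable {Q L}

lemma isOrtho_add_minimizerAlong (hL : ∀ u ≠ 0, 0 < Q (L u)) (v : V) (u : U) :
    Q.IsOrtho (v + L (minimizerAlong Q L hL v)) (L u) := by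
  set w := (LinearMap.BilinForm.toDual _ (nondegenerate_polarBilin_comp Q L hL)).symm
    (L.dualMap (Q.polarBilin v))
  have hw : polar Q (L w) (L u) = polar Q v (L u) := by
    have := LinearMap.BilinForm.apply_toDual_symm_apply (B := (Q.comp L).polarBilin)
      (hB := nondegenerate_polarBilin_comp Q L hL) (L.dualMap (Q.polarBilin v)) u
    simpa only [polarBilin_apply_apply, polar, comp_apply, map_add, LinearMap.dualMap_apply]
      using this
  have hmin : minimizerAlong Q L hL v = -w := rfl
  rw [← isOrtho_polarBilin, polarBilin_apply_apply, hmin, map_neg, polar_add_left, polar_neg_left,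
    hw, add_neg_cancel]

lemma apply_add_eq_minimizerAlong_add (hL : ∀ u ≠ 0, 0 < Q (L u)) (v : V) (u : U) :
    Q (v + L u) = Q (v + L (minimizerAlong Q L hL v)) + Q (L (u - minimizerAlong Q L hL v)) := by
  rw [← isOrtho_add_minimizerAlong hL v _, map_sub, add_add_sub_cancel]

lemma forall_le_iff_eq_minimizerAlong (hL : ∀ u ≠ 0, 0 < Q (L u)) (v : V) (u : U) :
    (∀ u', Q (v + L u) ≤ Q (v + L u')) ↔ u = minimizerAlong Q L hL v := by
  refine ⟨fun h => ?_, fun h u' => ?_⟩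
  · have h' := h (minimizerAlong Q L hL v)
    rw [apply_add_eq_minimizerAlong_add hL v u, add_le_iff_nonpos_right] at h'
    by_contra hne
    exact (hL _ (sub_ne_zero.mpr hne)).not_ge h'
  · rw [h, apply_add_eq_minimizerAlong_add hL v u', le_add_iff_nonneg_right]
    rcases eq_or_ne (u' - minimizerAlong Q L hL v) 0 with h0 | h0
    · rw [h0, map_zero, map_zero]
    · exact (hL _ h0).le

end QuadraticMap

noncomputable def mdotBilin : LinearMap.BilinForm ℝ (Matrix (Fin 3) (Fin 3) ℝ) :=
  LinearMap.mk₂ ℝ mdot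
    (fun A B D => by simp only [mdot, Matrix.add_apply, add_mul, Finset.sum_add_distrib])
    (fun c A D => by simp only [mdot, Matrix.smul_apply, smul_eq_mul, Finset.mul_sum, mul_assoc])
    (fun D A B => by simp only [mdot, Matrix.add_apply, mul_add, Finset.sum_add_distrib])
    (fun c A D => by
      simp only [mdot, Matrix.smul_apply, smul_eq_mul, Finset.mul_sum, mul_left_comm])

noncomputable def relMatₗ :
    Matrix (Fin 2) (Fin 2) ℝ × (Fin 3 → ℝ) →ₗ[ℝ] Matrix (Fin 3) (Fin 3) ℝ where
  toFun p := relMat p.1 p.2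
  map_add' p q := by
    ext i j; fin_cases i <;> fin_cases j <;> simp [relMat] <;> ring
  map_smul' c p := by
    ext i j; fin_cases i <;> fin_cases j <;> simp [relMat] <;> ring

lemma relMat_transpose (F : Matrix (Fin 2) (Fin 2) ℝ) (l : Fin 3 → ℝ) :
    (relMat F l)ᵀ = relMat F l := by
  ext i j; fin_cases i <;> fin_cases j <;> simp [relMat] <;> ring

lemma relMat_apply_castSucc {F : Matrix (Fin 2) (Fin 2) ℝ} (hF : Fᵀ = F) (l : Fin 3 → ℝ)
    (i j : Fin 2) : relMat F l i.castSucc j.castSucc = F i j := by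
  have h10 : F 1 0 = F 0 1 := congrFun (congrFun hF 0) 1
  fin_cases i <;> fin_cases j <;> simp [relMat, h10] <;> ring

lemma relMat_apply_last (F : Matrix (Fin 2) (Fin 2) ℝ) (l : Fin 3 → ℝ) (i : Fin 3) :
    relMat F l i (Fin.last 2) = l i := by
  fin_cases i <;> rfl

lemma relMat_eq_zero_iff {F : Matrix (Fin 2) (Fin 2) ℝ} (hF : Fᵀ = F) {l : Fin 3 → ℝ} :
    relMat F l = 0 ↔ F = 0 ∧ l = 0 := by
  refine ⟨fun h => ⟨Matrix.ext fun i j => ?_, funext fun i => ?_⟩, ?_⟩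
  · rw [← relMat_apply_castSucc hF l, h, Matrix.zero_apply, Matrix.zero_apply]
  · rw [← relMat_apply_last F l, h, Matrix.zero_apply, Pi.zero_apply]
  · rintro ⟨rfl, rfl⟩
    ext i j
    fin_cases i <;> fin_cases j <;> simp [relMat]

theorem stmt13_general
    (C : Matrix (Fin 3) (Fin 3) ℝ →ₗ[ℝ] Matrix (Fin 3) (Fin 3) ℝ)
    (Q : Matrix (Fin 3) (Fin 3) ℝ → ℝ)
    (hQ : ∀ F, Q F = (1/2) * mdot (C F) F)
    (hQpos : ∀ F : Matrix (Fin 3) (Fin 3) ℝ, Fᵀ = F → F ≠ 0 → 0 < Q F) :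
    ∃ A : Matrix (Fin 2) (Fin 2) ℝ →ₗ[ℝ] Matrix (Fin 3) (Fin 3) ℝ,
      (∀ F : Matrix (Fin 2) (Fin 2) ℝ,
        (∃! l : Fin 3 → ℝ, ∀ m : Fin 3 → ℝ, Q (relMat F l) ≤ Q (relMat F m)) ∧
        (∀ l : Fin 3 → ℝ, (∀ m : Fin 3 → ℝ, Q (relMat F l) ≤ Q (relMat F m)) →
          A F = relMat F l)) ∧
      (∀ F : Matrix (Fin 2) (Fin 2) ℝ, Fᵀ = F → F ≠ 0 → 0 < Q (A F)) := by
  obtain ⟨q, rfl⟩ : ∃ q : QuadraticForm ℝ (Matrix (Fin 3) (Fin 3) ℝ), ⇑q = Q :=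
    ⟨LinearMap.BilinMap.toQuadraticMap ((1/2 : ℝ) • (mdotBilin ∘ₗ C)),
      funext fun F => (hQ F).symm⟩
  let L := relMatₗ ∘ₗ LinearMap.inr ℝ _ _
  have hL : ∀ l ≠ 0, 0 < q (L l) := fun l hl =>
    hQpos _ (relMat_transpose 0 l) fun h => hl ((relMat_eq_zero_iff transpose_zero).1 h).2
  let Λ := QuadraticMap.minimizerAlong q L hL ∘ₗ relMatₗ ∘ₗ LinearMap.inl ℝ _ _
  have hmin (F : Matrix (Fin 2) (Fin 2) ℝ) (l : Fin 3 → ℝ) :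
      (∀ m, q (relMat F l) ≤ q (relMat F m)) ↔ l = Λ F := by
    have hsplit (m : Fin 3 → ℝ) : relMat F m = relMatₗ (F, 0) + L m := by
      rw [LinearMap.comp_apply, ← map_add]; simp [relMatₗ]
    simp only [hsplit]
    exact QuadraticMap.forall_le_iff_eq_minimizerAlong hL _ l
  refine ⟨relMatₗ ∘ₗ LinearMap.id.prod Λ,
    fun F => ⟨⟨Λ F, (hmin F _).2 rfl, fun l hl => (hmin F l).1 hl⟩,
      fun l hl => by rw [(hmin F l).1 hl]; rfl⟩,
    fun F hF hF0 => ?_⟩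
  exact hQpos _ (relMat_transpose _ _) fun h => hF0 ((relMat_eq_zero_iff hF).1 h).1

/-- for `Q` positive definite on symmetric matrices with `Q(F) = Q(sym F)`,
the relaxation `Q₂(F') := min_{λ} Q(relMat F' λ)` has a unique minimizer, the map
`𝔸 : F' ↦` minimizing matrix is linear, and `Q₂` is positive definite on symmetric
`2×2` matrices. -/
theorem stmt13
    (C : Matrix (Fin 3) (Fin 3) ℝ →ₗ[ℝ] Matrix (Fin 3) (Fin 3) ℝ)
    (hCsymm : ∀ F G, mdot (C F) G = mdot F (C G))
    (hCpsd : ∀ F, 0 ≤ mdot (C F) F)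
    (hCsym : ∀ F, C F = C (symPart F))
    (Q : Matrix (Fin 3) (Fin 3) ℝ → ℝ)
    (hQ : ∀ F, Q F = (1/2) * mdot (C F) F)
    (hQpos : ∀ F : Matrix (Fin 3) (Fin 3) ℝ, Fᵀ = F → F ≠ 0 → 0 < Q F) :
    ∃ A : Matrix (Fin 2) (Fin 2) ℝ →ₗ[ℝ] Matrix (Fin 3) (Fin 3) ℝ,
      (∀ F : Matrix (Fin 2) (Fin 2) ℝ,
        (∃! l : Fin 3 → ℝ, ∀ m : Fin 3 → ℝ, Q (relMat F l) ≤ Q (relMat F m)) ∧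
        (∀ l : Fin 3 → ℝ, (∀ m : Fin 3 → ℝ, Q (relMat F l) ≤ Q (relMat F m)) →
          A F = relMat F l)) ∧
      (∀ F : Matrix (Fin 2) (Fin 2) ℝ, Fᵀ = F → F ≠ 0 → 0 < Q (A F)) :=
  stmt13_general C Q hQ hQpos
end
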